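/- Let μ be a Borel probability measure on ℝ and I an open interval with μ(I) = 0 on which G_μ has no zero. Then for x ∈ I, g(x) = ∫ (s²+1)/(s-x)² dρ(s) = -G_μ'(x)/G_μ(x)² - 1, where ρ is the measure in the Nevanlinna representation of F_μ = 1/G_μ. -/

import Mathlib

/-!
For `z = x + iy` with `y > 0`, the imaginary part of the Nevanlinna representation
`1 / G_μ(z) = a + z + ∫ (1 + s z) / (s - z) dρ` reads
`y (1 + ∫ (s² + 1) / |s - z|² dρ) = y ∫ |z - s|⁻² dμ / |G_μ(z)|²`.
Since `μ` vanishes near `x`, the right-hand side is continuous at `z = x`, with value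
`∫ (x - s)⁻² dμ / G_μ(x)²`. On the left the integrands increase, as `y ↓ 0`, to
`(s² + 1) / (s - x)²`, so monotone convergence gives the identity.
-/

open MeasureTheory Set Complex Filter Topology

theorem Complex.im_one_add_mul_div_sub (z : ℂ) (s : ℝ) :
    ((1 + s * z) / (s - z)).im = z.im * ((s ^ 2 + 1) / normSq (s - z)) := by
  simp only [div_im, normSq_apply]
  simp
  ring

theorem Complex.im_inv_sub_ofReal (z : ℂ) (s : ℝ) :
    ((z - s)⁻¹).im = -(z.im * (normSq (z - s))⁻¹) := by
  simp [inv_im, div_eq_mul_inv]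

theorem Complex.im_ofReal_add_ofReal_mul_I (x y : ℝ) : ((x : ℂ) + y * I).im = y := by simp

theorem Complex.normSq_ofReal_sub_ofReal_add_mul_I (s x y : ℝ) :
    normSq (s - (x + y * I)) = (s - x) ^ 2 + y ^ 2 := by
  simp [normSq_apply]
  ring

theorem Complex.im_le_norm_ofReal_sub (z : ℂ) (s : ℝ) : z.im ≤ ‖(s : ℂ) - z‖ :=
  calc z.im ≤ |((s : ℂ) - z).im| := by simp [le_abs_self]
    _ ≤ ‖(s : ℂ) - z‖ := abs_im_le_norm _

theorem Complex.norm_one_add_mul_div_sub_le {z : ℂ} (hz : 0 < z.im) (s : ℝ) :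
    ‖(1 + s * z) / (s - z)‖ ≤ ‖z‖ + ‖1 + z ^ 2‖ / z.im := by
  have hne : (s : ℂ) - z ≠ 0 := fun h => by
    have := congrArg im h; simp at this; linarith
  have hsplit : (1 + s * z) / (s - z) = z + (1 + z ^ 2) / (s - z) := by
    field_simp; ring
  rw [hsplit]
  refine (norm_add_le _ _).trans (add_le_add le_rfl ?_)
  rw [norm_div]
  gcongr
  exact im_le_norm_ofReal_sub z s

theorem Complex.norm_inv_sub_ofReal_le {z : ℂ} (hz : 0 < z.im) (s : ℝ) :
    ‖(z - s)⁻¹‖ ≤ z.im⁻¹ := by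
  rw [norm_inv, norm_sub_rev]
  exact inv_anti₀ hz (im_le_norm_ofReal_sub z s)

section Integrability

variable (μ : Measure ℝ) [IsFiniteMeasure μ] {z : ℂ}

theorem integrable_one_add_mul_div_sub (hz : 0 < z.im) :
    Integrable (fun s : ℝ => (1 + s * z) / (s - z)) μ :=
  Integrable.mono' (integrable_const _)
    (by fun_prop : Measurable fun s : ℝ => (1 + s * z) / (s - z)).aestronglyMeasurable
    (ae_of_all _ (norm_one_add_mul_div_sub_le hz))

theorem integrable_inv_sub_ofReal (hz : 0 < z.im) :
    Integrable (fun s : ℝ => (z - s)⁻¹) μ :=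
  Integrable.mono' (integrable_const _)
    (by fun_prop : Measurable fun s : ℝ => (z - s)⁻¹).aestronglyMeasurable
    (ae_of_all _ (norm_inv_sub_ofReal_le hz))

theorem integrable_add_one_div_normSq (hz : 0 < z.im) :
    Integrable (fun s : ℝ => (s ^ 2 + 1) / normSq (s - z)) μ := by
  refine ((integrable_one_add_mul_div_sub μ hz).im.div_const z.im).congr (ae_of_all _ fun s => ?_)
  simp only [RCLike.im_to_complex, im_one_add_mul_div_sub]
  field_simp

theorem im_integral_one_add_mul_div_sub (hz : 0 < z.im) :
    (∫ s, (1 + s * z) / (s - z) ∂μ).im = z.im * ∫ s, (s ^ 2 + 1) / normSq (s - z) ∂μ := by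
  rw [← RCLike.im_to_complex, ← integral_im (integrable_one_add_mul_div_sub μ hz),
    ← integral_const_mul]
  simp only [RCLike.im_to_complex, im_one_add_mul_div_sub]

theorem im_integral_inv_sub_ofReal (hz : 0 < z.im) :
    (∫ s, (z - s)⁻¹ ∂μ).im = -(z.im * ∫ s, (normSq (z - s))⁻¹ ∂μ) := by
  rw [← RCLike.im_to_complex, ← integral_im (integrable_inv_sub_ofReal μ hz),
    ← integral_const_mul, ← integral_neg]
  simp only [RCLike.im_to_complex, im_inv_sub_ofReal]

end Integrability

theorem integral_div_normSq_eq_of_inv_integral_eq (μ ρ : Measure ℝ) [IsFiniteMeasure μ]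
    [IsFiniteMeasure ρ] {a : ℝ} {z : ℂ} (hz : 0 < z.im)
    (h : (∫ s, (z - s)⁻¹ ∂μ)⁻¹ = a + z + ∫ s, (1 + s * z) / (s - z) ∂ρ) :
    ∫ s, (s ^ 2 + 1) / normSq (s - z) ∂ρ
      = (∫ s, (normSq (z - s))⁻¹ ∂μ) / normSq (∫ s, (z - s)⁻¹ ∂μ) - 1 := by
  have him := congrArg im h
  rw [inv_im, im_integral_inv_sub_ofReal μ hz, add_im, add_im, ofReal_im,
    im_integral_one_add_mul_div_sub ρ hz] at him
  rw [eq_sub_iff_add_eq]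
  refine mul_left_cancel₀ hz.ne' ?_
  rw [neg_neg, mul_div_assoc] at him
  linarith

theorem exists_pos_ae_le_abs_sub {μ : Measure ℝ} {U : Set ℝ} {x : ℝ} (hU : U ∈ 𝓝 x)
    (hμU : μ U = 0) : ∃ δ > 0, ∀ᵐ s ∂μ, δ ≤ |x - s| := by
  obtain ⟨δ, hδ, hball⟩ := Metric.mem_nhds_iff.mp hU
  refine ⟨δ, hδ, ?_⟩
  filter_upwards [measure_eq_zero_iff_ae_notMem.mp (measure_mono_null hball hμU)] with s hs
  simpa [Metric.mem_ball, Real.dist_eq, abs_sub_comm] using hs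

theorem continuousAt_integral_comp_sub_ofReal {E : Type*} [NormedAddCommGroup E]
    [NormedSpace ℝ E] (μ : Measure ℝ) [IsFiniteMeasure μ] {φ : ℂ → E}
    (hφm : StronglyMeasurable φ) (hφc : ∀ w ≠ 0, ContinuousAt φ w) {x δ M : ℝ} (hδ : 0 < δ)
    (hM : ∀ w : ℂ, δ / 2 ≤ ‖w‖ → ‖φ w‖ ≤ M) (hμ : ∀ᵐ s ∂μ, δ ≤ |x - s|) :
    ContinuousAt (fun z : ℂ => ∫ s, φ (z - s) ∂μ) x := by
  refine continuousAt_of_dominated (bound := fun _ => M)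
    (Eventually.of_forall fun z => (hφm.comp_measurable (by fun_prop)).aestronglyMeasurable)
    ?_ (integrable_const M) ?_
  · filter_upwards [Metric.ball_mem_nhds (x : ℂ) (half_pos hδ)] with z hz
    filter_upwards [hμ] with s hs
    refine hM _ ?_
    have hxs : δ ≤ ‖(x : ℂ) - s‖ := by rwa [← ofReal_sub, norm_real, Real.norm_eq_abs]
    have hzx : ‖(x : ℂ) - z‖ < δ / 2 := by rwa [← dist_eq_norm, dist_comm]
    linarith [norm_sub_le_norm_sub_add_norm_sub (x : ℂ) z s]
  · filter_upwards [hμ] with s hs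
    have hne : (x : ℂ) - s ≠ 0 := by
      rw [← ofReal_sub, ofReal_ne_zero, ← abs_pos]; linarith
    exact ContinuousAt.comp (f := fun z : ℂ => z - s) (hφc _ hne) (by fun_prop)

theorem continuousAt_integral_inv_sub_ofReal (μ : Measure ℝ) [IsFiniteMeasure μ] {x δ : ℝ}
    (hδ : 0 < δ) (hμ : ∀ᵐ s ∂μ, δ ≤ |x - s|) :
    ContinuousAt (fun z : ℂ => ∫ s, (z - s)⁻¹ ∂μ) x :=
  continuousAt_integral_comp_sub_ofReal μ measurable_inv.stronglyMeasurable
    (fun _ hw => continuousAt_inv₀ hw) hδ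
    (fun w hw => by rw [norm_inv]; exact inv_anti₀ (half_pos hδ) hw) hμ

theorem continuousAt_integral_inv_normSq_sub_ofReal (μ : Measure ℝ) [IsFiniteMeasure μ]
    {x δ : ℝ} (hδ : 0 < δ) (hμ : ∀ᵐ s ∂μ, δ ≤ |x - s|) :
    ContinuousAt (fun z : ℂ => ∫ s, (normSq (z - s))⁻¹ ∂μ) x :=
  continuousAt_integral_comp_sub_ofReal μ (φ := fun w => (normSq w)⁻¹)
    continuous_normSq.measurable.inv.stronglyMeasurable
    (fun _ hw => continuous_normSq.continuousAt.inv₀ (normSq_pos.mpr hw).ne') hδ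
    (fun w hw => by
      rw [Real.norm_of_nonneg (inv_nonneg.mpr (normSq_nonneg w)), normSq_eq_norm_sq]
      exact inv_anti₀ (by positivity) (pow_le_pow_left₀ (half_pos hδ).le hw 2)) hμ

theorem tendsto_integral_inv_normSq_div_normSq_integral_inv (μ : Measure ℝ) [IsFiniteMeasure μ]
    {x δ : ℝ} (hδ : 0 < δ) (hμ : ∀ᵐ s ∂μ, δ ≤ |x - s|) (hGx : ∫ s, (x - s)⁻¹ ∂μ ≠ 0) :
    Tendsto (fun z : ℂ => (∫ s, (normSq (z - s))⁻¹ ∂μ) / normSq (∫ s, (z - s)⁻¹ ∂μ)) (𝓝 x)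
      (𝓝 ((∫ s, ((x - s) ^ 2)⁻¹ ∂μ) / (∫ s, (x - s)⁻¹ ∂μ) ^ 2)) := by
  have hG_x : ∫ s, ((x : ℂ) - s)⁻¹ ∂μ = ↑(∫ s, (x - s)⁻¹ ∂μ) := by
    rw [← integral_complex_ofReal]; push_cast; rfl
  have hB_x : ∫ s, (normSq ((x : ℂ) - s))⁻¹ ∂μ = ∫ s, ((x - s) ^ 2)⁻¹ ∂μ := by
    simp [← ofReal_sub, normSq_ofReal, sq]
  have hB := (continuousAt_integral_inv_normSq_sub_ofReal μ hδ hμ).tendsto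
  have hG := (continuous_normSq.continuousAt.comp
    (continuousAt_integral_inv_sub_ofReal μ hδ hμ)).tendsto
  simp only [Function.comp_def, hB_x, hG_x, normSq_ofReal, ← sq] at hB hG
  exact hB.div hG (pow_ne_zero 2 hGx)

theorem tendsto_ofReal_add_inv_succ_mul_I (x : ℝ) :
    Tendsto (fun n : ℕ => (x : ℂ) + ((n + 1 : ℝ)⁻¹ : ℝ) * I) atTop (𝓝 x) := by
  have hy : Tendsto (fun n : ℕ => (n + 1 : ℝ)⁻¹) atTop (𝓝 0) := by
    simpa [one_div] using tendsto_one_div_add_atTop_nhds_zero_nat (𝕜 := ℝ)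
  have h := (tendsto_const_nhds (x := (x : ℂ))).add
    (((continuous_ofReal.tendsto 0).comp hy).mul_const I)
  rwa [ofReal_zero, zero_mul, add_zero] at h

theorem lintegral_ofReal_add_one_div_sq_sub_eq {ρ : Measure ℝ} {x R : ℝ}
    (hint : ∀ n : ℕ, Integrable (fun s => (s ^ 2 + 1) / ((s - x) ^ 2 + ((n + 1 : ℝ)⁻¹) ^ 2)) ρ)
    (hR : Tendsto (fun n : ℕ => ∫ s, (s ^ 2 + 1) / ((s - x) ^ 2 + ((n + 1 : ℝ)⁻¹) ^ 2) ∂ρ)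
      atTop (𝓝 R)) :
    ∫⁻ s, ENNReal.ofReal ((s ^ 2 + 1) / (s - x) ^ 2) ∂ρ = ENNReal.ofReal R := by
  set f : ℕ → ℝ → ℝ := fun n s => (s ^ 2 + 1) / ((s - x) ^ 2 + ((n + 1 : ℝ)⁻¹) ^ 2)
  have hf_mono : ∀ s, Monotone fun n => ENNReal.ofReal (f n s) := fun s n m hnm => by
    refine ENNReal.ofReal_le_ofReal (div_le_div_of_nonneg_left (by positivity) (by positivity) ?_)
    gcongr
  set F : ℝ → ENNReal := fun s => ⨆ n, ENNReal.ofReal (f n s)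
  have hF_lim : ∀ s, Tendsto (fun n => ENNReal.ofReal (f n s)) atTop (𝓝 (F s)) :=
    fun s => tendsto_atTop_iSup (hf_mono s)
  have hF_eq : ∀ s ≠ x, F s = ENNReal.ofReal ((s ^ 2 + 1) / (s - x) ^ 2) := by
    intro s hs
    have hy : Tendsto (fun n : ℕ => ((n + 1 : ℝ)⁻¹) ^ 2) atTop (𝓝 0) := by
      simpa [one_div] using (tendsto_one_div_add_atTop_nhds_zero_nat (𝕜 := ℝ)).pow 2
    have hf : Tendsto (fun n => f n s) atTop (𝓝 ((s ^ 2 + 1) / (s - x) ^ 2)) := by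
      have h := (tendsto_const_nhds (x := s ^ 2 + 1)).div (tendsto_const_nhds.add hy)
        (show (s - x) ^ 2 + 0 ≠ 0 by simpa [sub_eq_zero] using hs)
      rwa [add_zero] at h
    exact tendsto_nhds_unique (hF_lim s) (ENNReal.tendsto_ofReal hf)
  -- `F x = ⊤`, whereas the junk value of the target integrand at `x` is `0`: finiteness of
  -- `∫⁻ F` is what makes `{x}` a `ρ`-null set.
  have hFx : F x = ⊤ := by
    have hf : Tendsto (fun n => f n x) atTop atTop := by
      refine tendsto_atTop_mono (fun n => ?_) tendsto_natCast_atTop_atTop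
      simp only [f, sub_self, zero_pow two_ne_zero, zero_add, inv_pow, div_inv_eq_mul]
      nlinarith [sq_nonneg x, sq_nonneg ((n : ℝ) + 1)]
    exact tendsto_nhds_unique (hF_lim x) (ENNReal.tendsto_ofReal_atTop.comp hf)
  have hF_int : ∫⁻ s, F s ∂ρ = ENNReal.ofReal R := by
    have hlim : Tendsto (fun n => ∫⁻ s, ENNReal.ofReal (f n s) ∂ρ) atTop (𝓝 (ENNReal.ofReal R)) := by
      refine (ENNReal.tendsto_ofReal hR).congr fun n => ?_
      exact ofReal_integral_eq_lintegral_ofReal (hint n) (ae_of_all _ fun s => by positivity)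
    rw [lintegral_iSup' (fun n => (by fun_prop : Measurable _).aemeasurable)
      (ae_of_all _ hf_mono)]
    exact tendsto_nhds_unique (tendsto_atTop_iSup fun n m h => lintegral_mono fun s => hf_mono s h)
      hlim
  have hF_meas : Measurable F := Measurable.iSup fun n => by fun_prop
  rw [← hF_int]
  refine lintegral_congr_ae ?_
  filter_upwards [ae_lt_top hF_meas (hF_int ▸ ENNReal.ofReal_ne_top)] with s hs
  exact (hF_eq s (by rintro rfl; simp [hFx] at hs)).symm

theorem stmt_15_general (μ : Measure ℝ) [IsProbabilityMeasure μ]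
    (ρ : Measure ℝ) [IsFiniteMeasure ρ] (a : ℝ)
    (hNev : ∀ z : ℂ, 0 < z.im →
      (∫ s : ℝ, (z - (s : ℂ))⁻¹ ∂μ)⁻¹
        = (a : ℂ) + z + ∫ s : ℝ, (1 + (s : ℂ) * z) / ((s : ℂ) - z) ∂ρ)
    (c d : ℝ) (hμI : μ (Ioo c d) = 0)
    (hnz : ∀ x ∈ Ioo c d, (∫ s : ℝ, (x - s)⁻¹ ∂μ) ≠ 0) :
    ∀ x ∈ Ioo c d,
      (∫⁻ s : ℝ, ENNReal.ofReal ((s ^ 2 + 1) / (s - x) ^ 2) ∂ρ)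
        = ENNReal.ofReal
            ((∫ s : ℝ, ((x - s) ^ 2)⁻¹ ∂μ) / (∫ s : ℝ, (x - s)⁻¹ ∂μ) ^ 2 - 1) := by
  intro x hx
  obtain ⟨δ, hδ, hμδ⟩ := exists_pos_ae_le_abs_sub (Ioo_mem_nhds hx.1 hx.2) hμI
  have hz_im : ∀ n : ℕ, 0 < ((x : ℂ) + ((n + 1 : ℝ)⁻¹ : ℝ) * I).im := fun n => by
    rw [im_ofReal_add_ofReal_mul_I]; positivity
  refine lintegral_ofReal_add_one_div_sq_sub_eq (fun n => ?_)
    ((((tendsto_integral_inv_normSq_div_normSq_integral_inv μ hδ hμδ (hnz x hx)).comp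
      (tendsto_ofReal_add_inv_succ_mul_I x)).sub_const 1).congr fun n => ?_)
  · simpa only [normSq_ofReal_sub_ofReal_add_mul_I] using
      integrable_add_one_div_normSq ρ (hz_im n)
  · rw [Function.comp_apply,
      ← integral_div_normSq_eq_of_inv_integral_eq μ ρ (hz_im n) (hNev _ (hz_im n))]
    simp only [normSq_ofReal_sub_ofReal_add_mul_I]

theorem stmt_15 (μ : Measure ℝ) [IsProbabilityMeasure μ]
    (ρ : Measure ℝ) [IsFiniteMeasure ρ] (a : ℝ)
    (hNev : ∀ z : ℂ, 0 < z.im →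
      (∫ s : ℝ, (z - (s : ℂ))⁻¹ ∂μ)⁻¹
        = (a : ℂ) + z + ∫ s : ℝ, (1 + (s : ℂ) * z) / ((s : ℂ) - z) ∂ρ)
    (c d : ℝ) (hcd : c < d) (hμI : μ (Ioo c d) = 0)
    (hnz : ∀ x ∈ Ioo c d, (∫ s : ℝ, (x - s)⁻¹ ∂μ) ≠ 0) :
    ∀ x ∈ Ioo c d,
      (∫⁻ s : ℝ, ENNReal.ofReal ((s ^ 2 + 1) / (s - x) ^ 2) ∂ρ)
        = ENNReal.ofReal
            ((∫ s : ℝ, ((x - s) ^ 2)⁻¹ ∂μ) / (∫ s : ℝ, (x - s)⁻¹ ∂μ) ^ 2 - 1) :=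
  stmt_15_general μ ρ a hNev c d hμI hnz
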